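/- arXiv:1901.10423 — 7 statements merged into one kernel-verified Lean document; each statement's English description precedes it below -/
import Mathlib

section
/- Let R > 0 and D > 0. For every θ with 0 ≤ θ ≤ 2·arctan(D/R), the point (R·sin θ, R·(1 − cos θ)) lies within distance D of the point (D, 0); that is, (R·sin θ − D)² + R²·(1 − cos θ)² ≤ D². -/
/-- For every arc angle θ with 0 ≤ θ ≤ 2·arctan(D/R), the point
(R·sin θ, R·(1 − cos θ)) lies within distance D of the kin at (D, 0). -/
theorem stmt_3 (R D : ℝ) (hR : 0 < R) (hD : 0 < D) :
    ∀ θ : ℝ, 0 ≤ θ → θ ≤ 2 * Real.arctan (D / R) →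
      (R * Real.sin θ - D) ^ 2 + R ^ 2 * (1 - Real.cos θ) ^ 2 ≤ D ^ 2 := by
  intro θ hθ0 hθ2
  set t := θ / 2 with ht
  have ht0 : 0 ≤ t := by positivity
  have htle : t ≤ Real.arctan (D / R) := by
    simp only [ht]; linarith
  have htlt : t < Real.pi / 2 := lt_of_le_of_lt htle (Real.arctan_lt_pi_div_two _)
  have hcos : 0 < Real.cos t := Real.cos_pos_of_mem_Ioo ⟨by linarith [Real.pi_pos], htlt⟩
  have hsin : 0 ≤ Real.sin t := Real.sin_nonneg_of_nonneg_of_le_pi ht0 (by linarith [Real.pi_pos])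
  have htan : Real.tan t ≤ D / R := by
    rcases htle.lt_or_eq with h | h
    · have := Real.tan_lt_tan_of_lt_of_lt_pi_div_two
        (by linarith [Real.neg_pi_div_two_lt_arctan (D/R)]) (Real.arctan_lt_pi_div_two _) h
      simpa [Real.tan_arctan] using this.le
    · rw [h, Real.tan_arctan]
  have hkey : R * Real.sin t ≤ D * Real.cos t := by
    rw [Real.tan_eq_sin_div_cos, div_le_div_iff₀ hcos hR] at htan
    linarith
  have h2 : θ = 2 * t := by rw [ht]; ring
  rw [h2, Real.sin_two_mul, Real.cos_two_mul]
  have hp : Real.sin t ^ 2 + Real.cos t ^ 2 = 1 := Real.sin_sq_add_cos_sq t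
  have heq : (R * (2 * Real.sin t * Real.cos t) - D) ^ 2
      + R ^ 2 * (1 - (2 * Real.cos t ^ 2 - 1)) ^ 2
      = D ^ 2 + 4 * (R * Real.sin t) * (R * Real.sin t - D * Real.cos t) := by
    linear_combination (-(4 * R ^ 2 * (1 - Real.cos t ^ 2))) * hp
  rw [heq]
  nlinarith [mul_nonneg (mul_nonneg hR.le hsin) (sub_nonneg.2 hkey)]
end

section
/- Let R > 0 and D > 0. For every θ with 0 < θ ≤ π, the point (R·sin θ, R·(1 − cos θ)) lies within distance D of (D, 0) if and only if θ ≤ 2·arctan(D/R). In particular, at the limit angle θ̄ = 2·arctan(D/R) the distance is exactly D: (R·sin θ̄ − D)² + R²·(1 − cos θ̄)² = D². -/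
/-!
Write θ = 2φ. The half-angle formulas turn the squared distance from (D, 0) into
D² + 4R·sin φ·(R·sin φ − D·cos φ), and for 0 < φ ≤ π/2 the factor sin φ is positive, so
the point is within distance D exactly when R·sin φ ≤ D·cos φ, i.e. tan φ ≤ D/R;
at φ = arctan(D/R) the second factor vanishes.
-/

open Real

lemma sq_sub_add_sq_one_sub_cos_two_mul (R D φ : ℝ) :
    (R * sin (2 * φ) - D) ^ 2 + R ^ 2 * (1 - cos (2 * φ)) ^ 2 =
      D ^ 2 + 4 * R * sin φ * (R * sin φ - D * cos φ) := by
  rw [sin_two_mul, cos_two_mul]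
  linear_combination 4 * R ^ 2 * (cos φ ^ 2 - 1) * sin_sq_add_cos_sq φ

lemma sin_le_mul_cos_iff_le_arctan {φ : ℝ} (t : ℝ) (h₁ : -(π / 2) < φ) (h₂ : φ ≤ π / 2) :
    sin φ ≤ t * cos φ ↔ φ ≤ arctan t := by
  rcases h₂.lt_or_eq with h₂ | rfl
  · have hcos : 0 < cos φ := cos_pos_of_mem_Ioo ⟨h₁, h₂⟩
    rw [← div_le_iff₀ hcos, ← tan_eq_sin_div_cos, ← arctan_le_arctan_iff, arctan_tan h₁ h₂]
  · rw [sin_pi_div_two, cos_pi_div_two, mul_zero]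
    exact iff_of_false (by norm_num) (arctan_lt_pi_div_two t).not_ge

lemma mul_sin_le_mul_cos_iff_le_arctan {R : ℝ} (D : ℝ) {φ : ℝ} (hR : 0 < R)
    (h₁ : -(π / 2) < φ) (h₂ : φ ≤ π / 2) :
    R * sin φ ≤ D * cos φ ↔ φ ≤ arctan (D / R) := by
  rw [← sin_le_mul_cos_iff_le_arctan _ h₁ h₂, div_mul_eq_mul_div, le_div_iff₀' hR]

lemma mul_sin_arctan_div (R D : ℝ) (hR : R ≠ 0) :
    R * sin (arctan (D / R)) = D * cos (arctan (D / R)) := by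
  have hcos := (cos_arctan_pos (D / R)).ne'
  have htan := tan_arctan (D / R)
  rw [tan_eq_sin_div_cos, div_eq_div_iff hcos hR] at htan
  linarith

theorem stmt_4_general (R D : ℝ) (hR : 0 < R) :
    (∀ θ : ℝ, 0 < θ → θ ≤ Real.pi →
      ((R * Real.sin θ - D) ^ 2 + R ^ 2 * (1 - Real.cos θ) ^ 2 ≤ D ^ 2 ↔
        θ ≤ 2 * Real.arctan (D / R))) ∧
    (R * Real.sin (2 * Real.arctan (D / R)) - D) ^ 2 +
        R ^ 2 * (1 - Real.cos (2 * Real.arctan (D / R))) ^ 2 = D ^ 2 := by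
  refine ⟨fun θ hθ₀ hθπ => ?_, ?_⟩
  · obtain ⟨φ, rfl⟩ : ∃ φ, θ = 2 * φ := ⟨θ / 2, by ring⟩
    have hsin : 0 < sin φ := sin_pos_of_pos_of_lt_pi (by linarith) (by linarith [pi_pos])
    have hfactor : 4 * R * sin φ * (R * sin φ - D * cos φ) ≤ 0 ↔ R * sin φ - D * cos φ ≤ 0 :=
      smul_nonpos_iff_nonpos_of_pos_left (by positivity : 0 < 4 * R * sin φ)
    rw [sq_sub_add_sq_one_sub_cos_two_mul, add_le_iff_nonpos_right, hfactor, sub_nonpos,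
      mul_sin_le_mul_cos_iff_le_arctan D hR (by linarith [pi_pos]) (by linarith)]
    constructor <;> intro h <;> linarith
  · rw [sq_sub_add_sq_one_sub_cos_two_mul, mul_sin_arctan_div R D hR.ne', sub_self, mul_zero,
      add_zero]

/-- For 0 < θ ≤ π, the point (R·sin θ, R·(1 − cos θ)) lies within distance D of
(D, 0) iff θ ≤ 2·arctan(D/R); and at θ̄ = 2·arctan(D/R) the distance is exactly D. -/
theorem stmt_4 (R D : ℝ) (hR : 0 < R) (hD : 0 < D) :
    (∀ θ : ℝ, 0 < θ → θ ≤ Real.pi →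
      ((R * Real.sin θ - D) ^ 2 + R ^ 2 * (1 - Real.cos θ) ^ 2 ≤ D ^ 2 ↔
        θ ≤ 2 * Real.arctan (D / R))) ∧
    (R * Real.sin (2 * Real.arctan (D / R)) - D) ^ 2 +
        R ^ 2 * (1 - Real.cos (2 * Real.arctan (D / R))) ^ 2 = D ^ 2 :=
  stmt_4_general R D hR
end

section
/- Let l > 0, V_max > 0, and let v_left, v_right ∈ [−1, 1] with v_right ≠ v_left and v_right + v_left > 0. Define R = (l/2)·(v_right + v_left)/(v_right − v_left) and ω = V_max·(v_right − v_left)/l. Let D > 0 and Δt > 0 satisfy |ω|·Δt ≤ 2·arctan(D/|R|). Then the robot's position after time Δt, namely (R·sin(ω·Δt), R·(1 − cos(ω·Δt))), lies within distance D of the point (D, 0): (R·sin(ω·Δt) − D)² + R²·(1 − cos(ω·Δt))² ≤ D². -/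
/-- If the swept arc angle |ω|·Δt stays below the limit angle 2·arctan(D/|R|),
a forward-moving differential-drive robot starting at the origin, heading along
the positive x-axis, ends within distance D of the kin at (D, 0). -/
theorem stmt_7 (l Vmax vleft vright : ℝ) (hl : 0 < l) (hV : 0 < Vmax)
    (hvl : vleft ∈ Set.Icc (-1 : ℝ) 1) (hvr : vright ∈ Set.Icc (-1 : ℝ) 1)
    (hne : vright ≠ vleft) (hfwd : 0 < vright + vleft)
    (R ω : ℝ)
    (hR : R = (l / 2) * (vright + vleft) / (vright - vleft))
    (hω : ω = Vmax * (vright - vleft) / l)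
    (D Δt : ℝ) (hD : 0 < D) (hΔt : 0 < Δt)
    (hcond : |ω| * Δt ≤ 2 * Real.arctan (D / |R|)) :
    (R * Real.sin (ω * Δt) - D) ^ 2 + R ^ 2 * (1 - Real.cos (ω * Δt)) ^ 2
      ≤ D ^ 2 := by
  have hd : vright - vleft ≠ 0 := sub_ne_zero.mpr hne
  set φ := |ω| * Δt with hφ
  set ψ := φ / 2 with hψ
  -- sign facts
  have hsc : R * Real.sin (ω * Δt) = |R| * Real.sin φ ∧
      Real.cos (ω * Δt) = Real.cos φ := by
    rcases lt_or_gt_of_ne hd with h | h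
    · have hωneg : ω < 0 := by
        rw [hω]; exact div_neg_of_neg_of_pos (mul_neg_of_pos_of_neg hV (by linarith)) hl
      have hRneg : R < 0 := by
        rw [hR]; exact div_neg_of_pos_of_neg (by positivity) h
      have h1 : |ω| = -ω := abs_of_neg hωneg
      have h2 : |R| = -R := abs_of_neg hRneg
      constructor
      · rw [hφ, h1, h2, neg_mul ω Δt, Real.sin_neg]; ring
      · rw [hφ, h1, neg_mul ω Δt, Real.cos_neg]
    · have hωpos : 0 < ω := by
        rw [hω]; positivity
      have hRpos : 0 < R := by
        rw [hR]; positivity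
      rw [hφ, abs_of_pos hωpos, abs_of_pos hRpos]; exact ⟨rfl, rfl⟩
  obtain ⟨hsin, hcos⟩ := hsc
  have hωne : ω ≠ 0 := by rw [hω]; positivity
  have hRne : R ≠ 0 := by
    rw [hR]; exact div_ne_zero (by positivity) hd
  have hRabs : 0 < |R| := abs_pos.mpr hRne
  have hφpos : 0 < φ := mul_pos (abs_pos.mpr hωne) hΔt
  have hψpos : 0 < ψ := by positivity
  have harc : Real.arctan (D / |R|) < Real.pi / 2 := Real.arctan_lt_pi_div_two _
  have hψle : ψ ≤ Real.arctan (D / |R|) := by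
    rw [hψ]; linarith
  have hψlt : ψ < Real.pi / 2 := lt_of_le_of_lt hψle harc
  have hcosψ : 0 < Real.cos ψ := Real.cos_pos_of_mem_Ioo ⟨by linarith [Real.pi_pos], hψlt⟩
  have hsinψ : 0 ≤ Real.sin ψ := Real.sin_nonneg_of_nonneg_of_le_pi (le_of_lt hψpos)
    (by linarith [Real.pi_pos])
  -- tan ψ ≤ D / |R|
  have htan : Real.tan ψ ≤ D / |R| := by
    have := Real.strictMonoOn_tan.monotoneOn (a := ψ) (b := Real.arctan (D / |R|))
      ⟨by linarith [Real.pi_pos], hψlt⟩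
      ⟨Real.neg_pi_div_two_lt_arctan _, harc⟩ hψle
    rwa [Real.tan_arctan] at this
  have hkey : |R| * Real.sin ψ ≤ D * Real.cos ψ := by
    rw [Real.tan_eq_sin_div_cos, div_le_div_iff₀ hcosψ hRabs] at htan
    linarith
  have h2ψ : φ = 2 * ψ := by rw [hψ]; ring
  have hsinφ : Real.sin φ = 2 * Real.sin ψ * Real.cos ψ := by
    rw [h2ψ, Real.sin_two_mul]
  have hcosφ : Real.cos φ = 1 - 2 * Real.sin ψ ^ 2 := by
    rw [h2ψ, Real.cos_two_mul]
    nlinarith [Real.sin_sq_add_cos_sq ψ]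
  have hR2 : R ^ 2 = |R| ^ 2 := (sq_abs R).symm
  rw [hsin, hcos, hsinφ, hcosφ, hR2]
  nlinarith [mul_le_mul_of_nonneg_left hkey (mul_nonneg hRabs.le hsinψ),
    Real.sin_sq_add_cos_sq ψ, sq_nonneg (|R| * Real.sin ψ),
    mul_nonneg hsinψ hcosψ.le, sq_nonneg (Real.sin ψ), sq_nonneg (Real.cos ψ)]
end

section
/- (Lemma 1, motion towards kin when kin detected, condition S1.) Let l > 0, r > 0, V_max > 0, Δt > 0, and let D ≥ √3·r. Suppose the robot uses normalized wheel speeds (v_left, v_right) = (1/3, 1), so that R = l and ω = (2/3)·V_max/l, and suppose V_max·Δt ≤ 3·l·arctan(√3·r/l). Then the robot's position after time Δt, namely (l·sin(ω·Δt), l·(1 − cos(ω·Δt))), lies within distance D of the kin at (D, 0): (l·sin(ω·Δt) − D)² + l²·(1 − cos(ω·Δt))² ≤ D². -/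
/-- Lemma 1 (motion towards kin when kin detected, condition S1): with wheel
speeds (1/3, 1), hence R = l and ω = (2/3)·V_max/l, if
V_max·Δt ≤ 3·l·arctan(√3·r/l) then after one control step the robot lies
within distance D of the kin at (D, 0), for any D ≥ √3·r. -/
theorem stmt_8 (l r Vmax Δt D : ℝ) (hl : 0 < l) (hr : 0 < r) (hV : 0 < Vmax)
    (hΔt : 0 < Δt) (hD : Real.sqrt 3 * r ≤ D)
    (R ω : ℝ) (hR : R = l) (hω : ω = (2/3) * Vmax / l)
    (hcond : Vmax * Δt ≤ 3 * l * Real.arctan (Real.sqrt 3 * r / l)) :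
    (l * Real.sin (ω * Δt) - D) ^ 2 + l ^ 2 * (1 - Real.cos (ω * Δt)) ^ 2
      ≤ D ^ 2 := by
  set a : ℝ := Real.sqrt 3 * r / l with ha
  have ha0 : 0 < a := by
    apply div_pos _ hl
    positivity
  set θ : ℝ := ω * Δt with hθ
  have hθpos : 0 < θ := by
    rw [hθ, hω]
    positivity
  have hθle : θ ≤ 2 * Real.arctan a := by
    rw [hθ, hω]
    rw [div_mul_eq_mul_div, div_le_iff₀ hl]
    nlinarith [hcond]
  set t : ℝ := θ / 2 with ht
  have htpos : 0 < t := by positivity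
  have htle : t ≤ Real.arctan a := by
    rw [ht]; linarith
  have htlt : t < Real.pi / 2 := lt_of_le_of_lt htle (Real.arctan_lt_pi_div_two a)
  have hcos : 0 < Real.cos t := Real.cos_pos_of_mem_Ioo ⟨by linarith [Real.pi_div_two_pos], htlt⟩
  have hsin : 0 < Real.sin t := Real.sin_pos_of_pos_of_lt_pi htpos
    (lt_trans htlt (by linarith [Real.pi_pos]))
  have htan : Real.tan t ≤ a := by
    calc Real.tan t ≤ Real.tan (Real.arctan a) := by
          apply Real.strictMonoOn_tan.monotoneOn
          · exact ⟨by linarith [Real.pi_div_two_pos], htlt⟩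
          · exact ⟨Real.neg_pi_div_two_lt_arctan a, Real.arctan_lt_pi_div_two a⟩
          · exact htle
      _ = a := Real.tan_arctan a
  have hDpos : 0 < D := lt_of_lt_of_le (by positivity) hD
  have hsinle : l * Real.sin t ≤ D * Real.cos t := by
    have h1 : Real.sin t = Real.tan t * Real.cos t := by
      rw [Real.tan_eq_sin_div_cos]; field_simp
    have h2 : Real.tan t ≤ D / l := by
      refine htan.trans ?_
      rw [ha, div_le_div_iff₀ hl hl]
      nlinarith [hD]
    calc l * Real.sin t = (Real.tan t) * (l * Real.cos t) := by rw [h1]; ring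
      _ ≤ (D / l) * (l * Real.cos t) := by
          apply mul_le_mul_of_nonneg_right h2
          positivity
      _ = D * Real.cos t := by field_simp
  have key : l * (1 - Real.cos θ) ≤ D * Real.sin θ := by
    have hcosθ : Real.cos θ = 1 - 2 * Real.sin t ^ 2 := by
      have : θ = 2 * t := by rw [ht]; ring
      rw [this, Real.cos_two_mul']
      nlinarith [Real.sin_sq_add_cos_sq t]
    have hsinθ : Real.sin θ = 2 * Real.sin t * Real.cos t := by
      have : θ = 2 * t := by rw [ht]; ring
      rw [this, Real.sin_two_mul]
    rw [hcosθ, hsinθ]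
    nlinarith [mul_le_mul_of_nonneg_left hsinle hsin.le]
  nlinarith [Real.sin_sq_add_cos_sq θ, mul_le_mul_of_nonneg_left key hl.le]
end

section
/- (Lemma 2, motion towards kin when nothing detected, condition S0.) Let l > 0, r > 0, V_max > 0, Δt > 0, and let D ≥ √3·r. Suppose the robot uses normalized wheel speeds (v_left, v_right) = (1, −2/3), so that R = −l/10 and ω = −(5/3)·V_max/l, and suppose V_max·Δt ≤ (6/5)·l·arctan(10·√3·r/l). Then the robot's position after time Δt, namely (R·sin(ω·Δt), R·(1 − cos(ω·Δt))), lies within distance D of the kin at (D, 0): (R·sin(ω·Δt) − D)² + R²·(1 − cos(ω·Δt))² ≤ D². -/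
/-- Lemma 2 (motion towards kin when nothing detected, condition S0): with
wheel speeds (1, −2/3), hence R = −l/10 and ω = −(5/3)·V_max/l, if
V_max·Δt ≤ (6/5)·l·arctan(10·√3·r/l) then after one control step the robot
lies within distance D of the last-seen kin at (D, 0), for any D ≥ √3·r. -/
theorem stmt_9 (l r Vmax Δt D : ℝ) (hl : 0 < l) (hr : 0 < r) (hV : 0 < Vmax)
    (hΔt : 0 < Δt) (hD : Real.sqrt 3 * r ≤ D)
    (R ω : ℝ) (hR : R = -l/10) (hω : ω = -(5/3) * Vmax / l)
    (hcond : Vmax * Δt ≤ (6/5) * l * Real.arctan (10 * Real.sqrt 3 * r / l)) :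
    (R * Real.sin (ω * Δt) - D) ^ 2 + R ^ 2 * (1 - Real.cos (ω * Δt)) ^ 2
      ≤ D ^ 2 := by
  have hD0 : 0 < D := lt_of_lt_of_le (by positivity) hD
  set t : ℝ := 5 / 6 * Vmax * Δt / l with ht_def
  have ht0 : 0 ≤ t := by positivity
  have harg' : 10 * Real.sqrt 3 * r / l ≤ 10 * D / l :=
    div_le_div_of_nonneg_right (by nlinarith [hD]) hl.le
  have ht : t ≤ Real.arctan (10 * D / l) := by
    have h1 : t ≤ Real.arctan (10 * Real.sqrt 3 * r / l) := by
      rw [ht_def, div_le_iff₀ hl]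
      nlinarith [hcond]
    exact h1.trans (Real.arctan_strictMono.monotone harg')
  have htlt : t < Real.pi / 2 := lt_of_le_of_lt ht (Real.arctan_lt_pi_div_two _)
  have hc : 0 < Real.cos t :=
    Real.cos_pos_of_mem_Ioo ⟨by linarith [Real.pi_div_two_pos], htlt⟩
  have hs : 0 ≤ Real.sin t :=
    Real.sin_nonneg_of_nonneg_of_le_pi ht0 (by linarith [Real.pi_pos])
  have htan : Real.tan t ≤ 10 * D / l := by
    calc Real.tan t ≤ Real.tan (Real.arctan (10 * D / l)) := by
          rcases eq_or_lt_of_le ht with h | h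
          · rw [h]
          · exact (Real.tan_lt_tan_of_nonneg_of_lt_pi_div_two ht0
              (Real.arctan_lt_pi_div_two _) h).le
      _ = 10 * D / l := Real.tan_arctan _
  have hkey : l / 10 * Real.sin t ≤ D * Real.cos t := by
    rw [Real.tan_eq_sin_div_cos, div_le_div_iff₀ hc hl] at htan
    nlinarith
  have hωt : ω * Δt = -(2 * t) := by
    rw [hω, ht_def]; field_simp; ring
  rw [hωt, Real.sin_neg, Real.cos_neg, Real.sin_two_mul, Real.cos_two_mul']
  have hpyth := Real.sin_sq_add_cos_sq t
  have hmul : 0 ≤ (l / 10 * Real.sin t) * (D * Real.cos t - l / 10 * Real.sin t) := by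
    apply mul_nonneg (by positivity); linarith
  rw [hR]
  have hid : (-l / 10 * -(2 * Real.sin t * Real.cos t) - D) ^ 2
      + (-l / 10) ^ 2 * (1 - (Real.cos t ^ 2 - Real.sin t ^ 2)) ^ 2
      = D ^ 2 - 4 * (l / 10 * Real.sin t * (D * Real.cos t - l / 10 * Real.sin t))
        + (l / 10) ^ 2 * (Real.sin t ^ 2 + Real.cos t ^ 2 - 1) ^ 2 := by ring
  rw [hid, hpyth]
  norm_num
  linarith [hmul]
end

section
/- (Lemma 3, motion towards kin when non-kin detected, condition S2.) Let l > 0, r > 0, V_max > 0, Δt > 0, and let D ≥ √3·r. Suppose the robot uses normalized wheel speeds (v_left, v_right) = (1, 0), so that R = −l/2 and ω = −V_max/l, and suppose V_max·Δt ≤ 2·l·arctan(2·√3·r/l). Then the robot's position after time Δt, namely (R·sin(ω·Δt), R·(1 − cos(ω·Δt))), lies within distance D of the kin at (D, 0): (R·sin(ω·Δt) − D)² + R²·(1 − cos(ω·Δt))² ≤ D². -/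
/-- Lemma 3 (motion towards kin when non-kin detected, condition S2): with
wheel speeds (1, 0), hence R = −l/2 and ω = −V_max/l, if
V_max·Δt ≤ 2·l·arctan(2·√3·r/l) then after one control step the robot lies
within distance D of the last-seen kin at (D, 0), for any D ≥ √3·r. -/
theorem stmt_10 (l r Vmax Δt D : ℝ) (hl : 0 < l) (hr : 0 < r) (hV : 0 < Vmax)
    (hΔt : 0 < Δt) (hD : Real.sqrt 3 * r ≤ D)
    (R ω : ℝ) (hR : R = -l/2) (hω : ω = -Vmax / l)
    (hcond : Vmax * Δt ≤ 2 * l * Real.arctan (2 * Real.sqrt 3 * r / l)) :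
    (R * Real.sin (ω * Δt) - D) ^ 2 + R ^ 2 * (1 - Real.cos (ω * Δt)) ^ 2
      ≤ D ^ 2 := by
  set a : ℝ := 2 * Real.sqrt 3 * r / l with ha
  set x : ℝ := Vmax * Δt / (2 * l) with hx
  have hx0 : 0 < x := by positivity
  have hxa : x ≤ Real.arctan a := by
    rw [hx, div_le_iff₀ (by positivity)]
    linarith [hcond]
  have hxlt : x < Real.pi / 2 := lt_of_le_of_lt hxa (Real.arctan_lt_pi_div_two a)
  have hxgt : -(Real.pi / 2) < x := by linarith [Real.pi_pos]
  have htan : Real.tan x ≤ a := by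
    have := Real.strictMonoOn_tan.monotoneOn
      (Set.mem_Ioo.mpr ⟨hxgt, hxlt⟩)
      (Set.mem_Ioo.mpr ⟨neg_lt_of_neg_lt (lt_trans (Real.arctan_lt_pi_div_two a)
        (by linarith [Real.pi_pos] : Real.pi / 2 < Real.pi / 2 + 1) |> fun _ => by
          linarith [Real.neg_pi_div_two_lt_arctan a]), Real.arctan_lt_pi_div_two a⟩) hxa
    simpa [Real.tan_arctan] using this
  have hcos : 0 < Real.cos x := Real.cos_pos_of_mem_Ioo ⟨hxgt, hxlt⟩
  have hsin : 0 ≤ Real.sin x := Real.sin_nonneg_of_nonneg_of_le_pi hx0.le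
    (by linarith [Real.pi_pos])
  have hsr : Real.sqrt 3 * r ≤ D := hD
  -- sin x ≤ (2D/l) cos x
  have hkey : l * Real.sin x ≤ 2 * D * Real.cos x := by
    have h1 : Real.sin x ≤ a * Real.cos x := by
      have h := htan
      rw [Real.tan_eq_sin_div_cos, div_le_iff₀ hcos] at h
      linarith
    have h2 : a * Real.cos x ≤ 2 * D / l * Real.cos x := by
      apply mul_le_mul_of_nonneg_right _ hcos.le
      rw [ha, div_le_div_iff₀ hl hl]
      nlinarith
    have h3 : Real.sin x ≤ 2 * D / l * Real.cos x := le_trans h1 h2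
    calc l * Real.sin x ≤ l * (2 * D / l * Real.cos x) :=
          mul_le_mul_of_nonneg_left h3 hl.le
      _ = 2 * D * Real.cos x := by field_simp
  have hωΔt : ω * Δt = -(2 * x) := by
    rw [hω, hx]; field_simp
  rw [hωΔt, Real.sin_neg, Real.cos_neg, Real.sin_two_mul, Real.cos_two_mul, hR]
  have hpyth := Real.sin_sq_add_cos_sq x
  have key2 : l ^ 2 * Real.sin x ^ 2 ≤ 2 * D * l * (Real.sin x * Real.cos x) := by
    nlinarith [mul_le_mul_of_nonneg_left hkey (mul_nonneg hl.le hsin)]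
  have hc2 : Real.cos x ^ 2 = 1 - Real.sin x ^ 2 := by linarith
  have h5 : l ^ 2 * Real.sin x ^ 4 + l ^ 2 * Real.sin x ^ 2 * Real.cos x ^ 2
      = l ^ 2 * Real.sin x ^ 2 := by rw [hc2]; ring
  rw [show (1 - (2 * Real.cos x ^ 2 - 1)) = 2 * Real.sin x ^ 2 by linarith]
  nlinarith [key2, h5]
end

section
/- (Quantitative core of Theorem 2, Chaining.) Let r > 0 and l > 0 with √3·r ≥ l, and let V_max > 0, Δt > 0 satisfy V_max·Δt ≤ (6/5)·l·arctan(10·√3·r/l). Then all three conditions hold simultaneously: V_max·Δt ≤ 3·l·arctan(√3·r/l) (condition S1), V_max·Δt ≤ (6/5)·l·arctan(10·√3·r/l) (condition S0), and V_max·Δt ≤ 2·l·arctan(2·√3·r/l) (condition S2). -/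
lemma arctan_sqrt_three' : Real.arctan (Real.sqrt 3) = Real.pi / 3 := by
  rw [← Real.tan_pi_div_three, Real.arctan_tan] <;> nlinarith [Real.pi_pos]

/-- Quantitative core of Theorem 2 (Chaining): in the regime √3·r ≥ l, if the
strictest condition (S0) holds, then all three convergence conditions (S1),
(S0), (S2) hold simultaneously. -/
theorem stmt_12 (r l Vmax Δt : ℝ) (hr : 0 < r) (hl : 0 < l)
    (h : l ≤ Real.sqrt 3 * r) (hV : 0 < Vmax) (hΔt : 0 < Δt)
    (hS0 : Vmax * Δt ≤ (6/5) * l * Real.arctan (10 * Real.sqrt 3 * r / l)) :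
    Vmax * Δt ≤ 3 * l * Real.arctan (Real.sqrt 3 * r / l) ∧
    Vmax * Δt ≤ (6/5) * l * Real.arctan (10 * Real.sqrt 3 * r / l) ∧
    Vmax * Δt ≤ 2 * l * Real.arctan (2 * Real.sqrt 3 * r / l) := by
  have hx : (1 : ℝ) ≤ Real.sqrt 3 * r / l := (one_le_div hl).mpr h
  have hs3 : Real.sqrt 3 ≤ 2 := by
    nlinarith [Real.sq_sqrt (by norm_num : (3:ℝ) ≥ 0), Real.sqrt_nonneg 3]
  have h10 : Real.arctan (10 * Real.sqrt 3 * r / l) < Real.pi / 2 :=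
    Real.arctan_lt_pi_div_two _
  have h1 : Real.pi / 4 ≤ Real.arctan (Real.sqrt 3 * r / l) := by
    rw [← Real.arctan_one]; exact Real.arctan_strictMono.monotone hx
  have h2 : Real.pi / 3 ≤ Real.arctan (2 * (Real.sqrt 3 * r / l)) := by
    rw [← arctan_sqrt_three']
    exact Real.arctan_strictMono.monotone (by nlinarith)
  have h2' : Real.pi / 3 ≤ Real.arctan (2 * Real.sqrt 3 * r / l) := by
    rw [show 2 * Real.sqrt 3 * r / l = 2 * (Real.sqrt 3 * r / l) by ring]; exact h2
  refine ⟨?_, hS0, ?_⟩ <;> nlinarith [Real.pi_pos]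
end
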